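/- arXiv:0810.2327 — 7 statements merged into one kernel-verified Lean document; each statement's English description precedes it below -/
import Mathlib

section
/- For any two density operators ρ and σ on an n-dimensional complex Hilbert space, the trace norm satisfies ‖ρ − σ‖₁ ≥ 1 − n·Tr(ρσ). -/
open ComplexOrder

/-- The trace norm of a Hermitian matrix: sum of absolute values of its eigenvalues. -/
noncomputable def traceNorm {n : ℕ} {A : Matrix (Fin n) (Fin n) ℂ}
    (hA : A.IsHermitian) : ℝ :=
  ∑ i, |hA.eigenvalues i|

/-! Work in an eigenbasis of `σ`. The diagonal `p` of `ρ` and the eigenvalues `s` of `σ` in that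
basis are probability vectors with `Tr(ρσ) = ∑ pᵢ sᵢ`, and since deleting the off-diagonal part
(pinching) cannot increase the trace norm, `‖ρ - σ‖₁ ≥ ∑ |pᵢ - sᵢ|`. Classically, with
`m = ∑ min(pᵢ, sᵢ)` one has `∑ |pᵢ - sᵢ| = 2 - 2m ≥ 1 - m²`, and by Cauchy–Schwarz
`m² ≤ n ∑ min(pᵢ, sᵢ)² ≤ n ∑ pᵢ sᵢ`. -/

open Matrix Unitary

lemma abs_sub_eq_add_sub_two_mul_min (a b : ℝ) : |a - b| = a + b - 2 * min a b := by
  linarith [max_sub_min_eq_abs' a b, min_add_max a b]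

lemma min_sq_le_mul {a b : ℝ} (ha : 0 ≤ a) (hb : 0 ≤ b) : min a b ^ 2 ≤ a * b := by
  rw [sq]
  exact mul_le_mul (min_le_left a b) (min_le_right a b) (le_min ha hb) ha

theorem one_sub_card_mul_sum_mul_le_sum_abs_sub {ι : Type*} [Fintype ι] {p q : ι → ℝ}
    (hp : ∀ i, 0 ≤ p i) (hq : ∀ i, 0 ≤ q i) (hp1 : ∑ i, p i = 1) (hq1 : ∑ i, q i = 1) :
    1 - Fintype.card ι * ∑ i, p i * q i ≤ ∑ i, |p i - q i| := by
  set m := ∑ i, min (p i) (q i)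
  have h_abs : ∑ i, |p i - q i| = 2 - 2 * m := by
    simp only [abs_sub_eq_add_sub_two_mul_min, Finset.sum_sub_distrib, Finset.sum_add_distrib,
      ← Finset.mul_sum, hp1, hq1, m]
    ring
  have h_sq : m ^ 2 ≤ Fintype.card ι * ∑ i, p i * q i := calc
    m ^ 2 ≤ Fintype.card ι * ∑ i, min (p i) (q i) ^ 2 := sq_sum_le_card_mul_sum_sq
    _ ≤ Fintype.card ι * ∑ i, p i * q i := by gcongr with i; exact min_sq_le_mul (hp i) (hq i)
  nlinarith [sq_nonneg (1 - m)]

namespace Matrix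

variable {ι : Type*} [Fintype ι] [DecidableEq ι]

lemma trace_mul_diagonal {R : Type*} [NonUnitalNonAssocSemiring R] (A : Matrix ι ι R)
    (d : ι → R) : (A * diagonal d).trace = ∑ i, A i i * d i := by
  simp only [trace, diag_apply, mul_diagonal]

lemma trace_conjStarAlgAut {R : Type*} [CommRing R] [StarRing R] (U : unitary (Matrix ι ι R))
    (X : Matrix ι ι R) : (conjStarAlgAut R _ U X).trace = X.trace := by
  rw [conjStarAlgAut_apply, trace_mul_cycle, coe_star_mul_self, one_mul]

variable {𝕜 : Type*} [RCLike 𝕜]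

lemma IsHermitian.re_trace_eq_sum_eigenvalues {A : Matrix ι ι 𝕜} (hA : A.IsHermitian) :
    RCLike.re A.trace = ∑ i, hA.eigenvalues i := by
  simp only [hA.trace_eq_sum_eigenvalues, map_sum, RCLike.ofReal_re]

lemma IsHermitian.re_trace_mul_eq_sum_re_diag_mul_eigenvalues {σ : Matrix ι ι 𝕜}
    (hσ : σ.IsHermitian) (A : Matrix ι ι 𝕜) :
    RCLike.re (A * σ).trace = ∑ i,
      RCLike.re (conjStarAlgAut 𝕜 _ (star hσ.eigenvectorUnitary) A i i) * hσ.eigenvalues i := by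
  rw [← trace_conjStarAlgAut (star hσ.eigenvectorUnitary), map_mul,
    hσ.conjStarAlgAut_star_eigenvectorUnitary, trace_mul_diagonal, map_sum]
  simp only [Function.comp_apply, RCLike.re_mul_ofReal]

lemma sum_norm_sq_apply_of_mem_unitary {U : Matrix ι ι 𝕜} (hU : U ∈ unitary (Matrix ι ι 𝕜))
    (j : ι) : ∑ i, ‖U i j‖ ^ 2 = 1 := by
  have h : (star U * U) j j = 1 := by rw [star_mul_self_of_mem hU, one_apply_eq]
  simp only [mul_apply, star_apply, RCLike.star_def, RCLike.conj_mul] at h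
  exact_mod_cast h

lemma mul_diagonal_mul_star_apply_self (M : Matrix ι ι 𝕜) (d : ι → ℝ) (i : ι) :
    (M * diagonal (RCLike.ofReal ∘ d) * star M : Matrix ι ι 𝕜) i i =
      ((∑ j, d j * ‖M i j‖ ^ 2 : ℝ) : 𝕜) := by
  rw [mul_apply]
  push_cast
  refine Finset.sum_congr rfl fun j _ ↦ ?_
  rw [mul_diagonal, star_apply, RCLike.star_def, Function.comp_apply, mul_right_comm,
    RCLike.mul_conj, mul_comm]

lemma sum_norm_diag_conjStarAlgAut_diagonal_le (M : unitary (Matrix ι ι 𝕜)) (d : ι → ℝ) :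
    ∑ i, ‖conjStarAlgAut 𝕜 _ M (diagonal (RCLike.ofReal ∘ d)) i i‖ ≤ ∑ j, |d j| := calc
  _ = ∑ i, |∑ j, d j * ‖(M : Matrix ι ι 𝕜) i j‖ ^ 2| := by
    simp only [conjStarAlgAut_apply, mul_diagonal_mul_star_apply_self, RCLike.norm_ofReal]
  _ ≤ ∑ i, ∑ j, |d j| * ‖(M : Matrix ι ι 𝕜) i j‖ ^ 2 := by
    gcongr with i
    refine (Finset.abs_sum_le_sum_abs _ _).trans_eq ?_
    simp only [abs_mul, abs_sq]
  _ = ∑ j, |d j| * ∑ i, ‖(M : Matrix ι ι 𝕜) i j‖ ^ 2 := by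
    rw [Finset.sum_comm]
    simp only [Finset.mul_sum]
  _ = ∑ j, |d j| := by simp only [sum_norm_sq_apply_of_mem_unitary M.2, mul_one]

end Matrix

lemma sum_norm_diag_conjStarAlgAut_le_traceNorm {n : ℕ} {A : Matrix (Fin n) (Fin n) ℂ}
    (hA : A.IsHermitian) (U : unitary (Matrix (Fin n) (Fin n) ℂ)) :
    ∑ i, ‖conjStarAlgAut ℂ _ U A i i‖ ≤ traceNorm hA := by
  have h := sum_norm_diag_conjStarAlgAut_diagonal_le (U * hA.eigenvectorUnitary) hA.eigenvalues
  rwa [conjStarAlgAut_mul_apply, ← hA.spectral_theorem] at h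

/-- For density operators `ρ, σ` on an `n`-dimensional Hilbert space,
`‖ρ − σ‖₁ ≥ 1 − n·Tr(ρσ)`. -/
theorem traceNorm_ge_one_sub_dim_mul_trace {n : ℕ}
    (ρ σ : Matrix (Fin n) (Fin n) ℂ) (hρ : ρ.PosSemidef) (hσ : σ.PosSemidef)
    (hρ1 : ρ.trace = 1) (hσ1 : σ.trace = 1) :
    traceNorm (hρ.1.sub hσ.1) ≥ 1 - (n : ℝ) * ((ρ * σ).trace).re := by
  set V := star hσ.1.eigenvectorUnitary
  set B := conjStarAlgAut ℂ _ V ρ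
  set s := hσ.1.eigenvalues
  have hσ_diag : conjStarAlgAut ℂ _ V σ = diagonal (RCLike.ofReal ∘ s) :=
    hσ.1.conjStarAlgAut_star_eigenvectorUnitary
  have hB : B.PosSemidef := hρ.mul_mul_conjTranspose_same _
  have hB1 : ∑ i, (B i i).re = 1 := by
    simpa only [trace, diag_apply, Complex.re_sum, Complex.one_re] using
      congrArg Complex.re ((trace_conjStarAlgAut V ρ).trans hρ1)
  have hs1 : ∑ i, s i = 1 := by
    rw [← hσ.1.re_trace_eq_sum_eigenvalues, hσ1, RCLike.one_re]
  rw [ge_iff_le]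
  calc 1 - n * ((ρ * σ).trace).re = 1 - Fintype.card (Fin n) * ∑ i, (B i i).re * s i := by
        rw [Fintype.card_fin, ← RCLike.re_to_complex,
          hσ.1.re_trace_mul_eq_sum_re_diag_mul_eigenvalues]
        rfl
    _ ≤ ∑ i, |(B i i).re - s i| :=
        one_sub_card_mul_sum_mul_le_sum_abs_sub (fun i ↦ (Complex.nonneg_iff.mp hB.diag_nonneg).1)
          hσ.eigenvalues_nonneg hB1 hs1
    _ ≤ ∑ i, ‖conjStarAlgAut ℂ _ V (ρ - σ) i i‖ := by
        gcongr with i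
        rw [map_sub, hσ_diag, Matrix.sub_apply, diagonal_apply_eq, Function.comp_apply]
        have h := Complex.abs_re_le_norm (B i i - s i)
        rwa [Complex.sub_re, Complex.ofReal_re] at h
    _ ≤ traceNorm (hρ.1.sub hσ.1) := sum_norm_diag_conjStarAlgAut_le_traceNorm _ V
end

section
/- Let X ~ χ²_{2a} and Y ~ χ²_{2b} be independent chi-square random variables with 2a and 2b degrees of freedom respectively (a, b positive integers). Then (1/2)·E|X/(2a) − Y/(2b)| = 1 − (1/(a+b)) · Σ_{k=0}^{a−1} Σ_{ℓ=0}^{b−1} p^k (1−p)^ℓ · C(k+ℓ, k), where p = a/(a+b). -/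
/-!
Put `U = X/(2a)` and `V = Y/(2b)`. Then `E U = E V = 1` and `|U - V| = U + V - 2 min(U, V)`, so the
left side is `1 - E min(U, V)`. By the layer-cake formula and independence,
`E min(U, V) = ∫₀^∞ P(U > t) P(V > t) dt`, and the `χ²_{2a}` tail is a Poisson sum:
`P(X > s) = e^{-s/2} Σ_{k<a} (s/2)^k / k!`. Multiplying the two tails and integrating term by term
with `∫₀^∞ t^{k+ℓ} e^{-(a+b)t} dt = (k+ℓ)! / (a+b)^{k+ℓ+1}` yields the double sum.
-/

open MeasureTheory ProbabilityTheory

/-- The density of the chi-square distribution with `2a` degrees of freedom. -/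
noncomputable def chiSqDensity (a : ℕ) (x : ℝ) : ℝ :=
  if 0 ≤ x then x ^ (a - 1) * Real.exp (-x / 2) / (2 ^ a * (Nat.factorial (a - 1))) else 0

open Real Set Filter Topology
open scoped Nat

lemma integral_pow_mul_exp_neg_mul_Ioi (n : ℕ) {c : ℝ} (hc : 0 < c) :
    ∫ t in Ioi (0 : ℝ), t ^ n * exp (-(c * t)) = n ! / c ^ (n + 1) := by
  have h := integral_rpow_mul_exp_neg_mul_Ioi (a := (n : ℝ) + 1) (by positivity) hc
  rw [add_sub_cancel_right, Gamma_nat_eq_factorial, ← Nat.cast_succ] at h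
  simp only [rpow_natCast] at h
  rw [h, one_div, inv_pow, inv_mul_eq_div]

lemma integrableOn_pow_mul_exp_neg_mul_Ioi (n : ℕ) {c : ℝ} (hc : 0 < c) :
    IntegrableOn (fun t => t ^ n * exp (-(c * t))) (Ioi 0) :=
  .of_integral_ne_zero (by rw [integral_pow_mul_exp_neg_mul_Ioi n hc]; positivity)

/-- `erlangTail n x = P(Poisson(x) < n)`, which is also the probability that a sum of `n`
independent standard exponential variables exceeds `x`. -/
noncomputable def erlangTail (n : ℕ) (x : ℝ) : ℝ :=
  exp (-x) * ∑ k ∈ Finset.range n, x ^ k / k !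

lemma erlangTail_nonneg (n : ℕ) {x : ℝ} (hx : 0 ≤ x) : 0 ≤ erlangTail n x := by
  unfold erlangTail; positivity

lemma hasDerivAt_sum_range_pow_div_factorial (n : ℕ) (x : ℝ) :
    HasDerivAt (fun y : ℝ => ∑ k ∈ Finset.range (n + 1), y ^ k / (k ! : ℝ))
      (∑ k ∈ Finset.range n, x ^ k / k !) x := by
  induction n with
  | zero => simpa using hasDerivAt_const x (1 : ℝ)
  | succ n ih =>
    have hterm : HasDerivAt (fun y : ℝ => y ^ (n + 1) / ((n + 1)! : ℝ)) (x ^ n / n !) x := by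
      refine ((hasDerivAt_pow (n + 1) x).div_const ((n + 1)! : ℝ)).congr_deriv ?_
      rw [Nat.factorial_succ]; push_cast; field_simp
    simp only [Finset.sum_range_succ _ (n + 1)]
    exact (ih.add hterm).congr_deriv (Finset.sum_range_succ _ n).symm

lemma hasDerivAt_erlangTail_succ (n : ℕ) (x : ℝ) :
    HasDerivAt (erlangTail (n + 1)) (-(exp (-x) * x ^ n / n !)) x := by
  refine ((hasDerivAt_neg x).exp.mul (hasDerivAt_sum_range_pow_div_factorial n x)).congr_deriv ?_
  rw [Finset.sum_range_succ]; ring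

lemma tendsto_erlangTail_atTop (n : ℕ) : Tendsto (erlangTail n) atTop (𝓝 0) := by
  have h := tendsto_finsetSum (Finset.range n) fun k _ =>
    (tendsto_pow_mul_exp_neg_atTop_nhds_zero k).div_const (k ! : ℝ)
  simp only [zero_div, Finset.sum_const_zero] at h
  refine h.congr fun x => ?_
  rw [erlangTail, Finset.mul_sum]
  exact Finset.sum_congr rfl fun k _ => by ring

lemma erlangTail_zero_right {n : ℕ} (hn : 0 < n) : erlangTail n 0 = 1 := by
  obtain ⟨m, rfl⟩ := Nat.exists_eq_add_one_of_ne_zero hn.ne'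
  simp [erlangTail, Finset.sum_range_succ']

lemma chiSqDensity_of_neg (a : ℕ) {x : ℝ} (hx : x < 0) : chiSqDensity a x = 0 :=
  if_neg hx.not_ge

lemma chiSqDensity_nonneg (a : ℕ) (x : ℝ) : 0 ≤ chiSqDensity a x := by
  unfold chiSqDensity; split_ifs <;> positivity

lemma measurable_chiSqDensity (a : ℕ) : Measurable (chiSqDensity a) :=
  Measurable.ite measurableSet_Ici (by fun_prop) measurable_const

lemma chiSqDensity_succ_of_nonneg (m : ℕ) {x : ℝ} (hx : 0 ≤ x) :
    chiSqDensity (m + 1) x = exp (-(x / 2)) * (x / 2) ^ m / m ! / 2 := by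
  rw [chiSqDensity, if_pos hx, Nat.add_sub_cancel, div_pow, pow_succ, neg_div]
  field_simp

lemma mul_chiSqDensity_succ (m : ℕ) (x : ℝ) :
    x * chiSqDensity (m + 1) x = 2 * (m + 1) * chiSqDensity (m + 2) x := by
  rcases lt_or_ge x 0 with hx | hx
  · simp [chiSqDensity_of_neg _ hx]
  · rw [chiSqDensity_succ_of_nonneg m hx, chiSqDensity_succ_of_nonneg (m + 1) hx,
      Nat.factorial_succ]
    push_cast
    field_simp
    ring

lemma integrableOn_chiSqDensity_Ioi (a : ℕ) : IntegrableOn (chiSqDensity a) (Ioi 0) := by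
  have h : IntegrableOn (fun x => x ^ (a - 1) * exp (-(1 / 2 * x)) / (2 ^ a * ((a - 1)! : ℝ)))
      (Ioi 0) := (integrableOn_pow_mul_exp_neg_mul_Ioi (a - 1) (by norm_num)).div_const _
  refine h.congr_fun (fun x hx => ?_) measurableSet_Ioi
  rw [chiSqDensity, if_pos (le_of_lt hx)]
  ring_nf

lemma integrable_chiSqDensity (a : ℕ) : Integrable (chiSqDensity a) := by
  have hneg : IntegrableOn (chiSqDensity a) (Iio 0) := integrableOn_zero.congr_fun
    (fun x hx => (chiSqDensity_of_neg a hx).symm) measurableSet_Iio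
  have hpos : IntegrableOn (chiSqDensity a) (Ici 0) :=
    (integrableOn_Ici_iff_integrableOn_Ioi enorm_ne_top).2 (integrableOn_chiSqDensity_Ioi a)
  rw [← integrableOn_univ, ← Iio_union_Ici]
  exact hneg.union hpos

lemma hasDerivAt_erlangTail_succ_half (m : ℕ) (x : ℝ) :
    HasDerivAt (fun y => erlangTail (m + 1) (y / 2))
      (-(exp (-(x / 2)) * (x / 2) ^ m / m ! / 2)) x := by
  have h := (hasDerivAt_erlangTail_succ m (x / 2)).comp x ((hasDerivAt_id' x).div_const 2)
  exact h.congr_deriv (by ring)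

lemma integral_Ioi_chiSqDensity {a : ℕ} (ha : 0 < a) {s : ℝ} (hs : 0 ≤ s) :
    ∫ x in Ioi s, chiSqDensity a x = erlangTail a (s / 2) := by
  obtain ⟨m, rfl⟩ := Nat.exists_eq_add_one_of_ne_zero ha.ne'
  have hderiv : ∀ x ∈ Ioi s,
      HasDerivAt (fun y => -erlangTail (m + 1) (y / 2)) (chiSqDensity (m + 1) x) x := fun x hx => by
    rw [chiSqDensity_succ_of_nonneg m (hs.trans (le_of_lt hx)), ← neg_neg (_ / 2)]
    exact (hasDerivAt_erlangTail_succ_half m x).neg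
  have hlim : Tendsto (fun y => -erlangTail (m + 1) (y / 2)) atTop (𝓝 0) := by
    simpa using ((tendsto_erlangTail_atTop _).comp (tendsto_id.atTop_div_const two_pos)).neg
  rw [integral_Ioi_of_hasDerivAt_of_tendsto
    (hasDerivAt_erlangTail_succ_half m s).continuousAt.neg.continuousWithinAt hderiv
    ((integrableOn_chiSqDensity_Ioi _).mono_set (Ioi_subset_Ioi hs)) hlim]
  simp

lemma integral_chiSqDensity {a : ℕ} (ha : 0 < a) : ∫ x, chiSqDensity a x = 1 := by
  rw [← setIntegral_eq_integral_of_forall_compl_eq_zero (s := Ici 0) fun x hx =>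
    chiSqDensity_of_neg a (not_le.1 hx), integral_Ici_eq_integral_Ioi,
    integral_Ioi_chiSqDensity ha le_rfl, zero_div, erlangTail_zero_right ha]

noncomputable def chiSqMeasure (a : ℕ) : Measure ℝ :=
  volume.withDensity fun x => ENNReal.ofReal (chiSqDensity a x)

lemma chiSqMeasure_Ioi {a : ℕ} (ha : 0 < a) {s : ℝ} (hs : 0 ≤ s) :
    chiSqMeasure a (Ioi s) = ENNReal.ofReal (erlangTail a (s / 2)) := by
  rw [chiSqMeasure, withDensity_apply _ measurableSet_Ioi, ← ofReal_integral_eq_lintegral_ofReal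
    ((integrableOn_chiSqDensity_Ioi a).mono_set (Ioi_subset_Ioi hs))
    (ae_of_all _ (chiSqDensity_nonneg a)), integral_Ioi_chiSqDensity ha hs]

lemma ae_nonneg_chiSqMeasure (a : ℕ) : ∀ᵐ x ∂chiSqMeasure a, 0 ≤ x := by
  rw [chiSqMeasure, ae_withDensity_iff (measurable_chiSqDensity a).ennreal_ofReal]
  refine ae_of_all _ fun x hx => not_lt.1 fun hneg => hx ?_
  rw [chiSqDensity_of_neg a hneg, ENNReal.ofReal_zero]

lemma integral_chiSqMeasure (a : ℕ) (g : ℝ → ℝ) :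
    ∫ x, g x ∂chiSqMeasure a = ∫ x, chiSqDensity a x * g x := by
  rw [chiSqMeasure, integral_withDensity_eq_integral_toReal_smul
    (measurable_chiSqDensity a).ennreal_ofReal (ae_of_all _ fun _ => ENNReal.ofReal_lt_top)]
  simp_rw [ENNReal.toReal_ofReal (chiSqDensity_nonneg a _), smul_eq_mul]

lemma integrable_id_chiSqMeasure {a : ℕ} (ha : 0 < a) : Integrable id (chiSqMeasure a) := by
  obtain ⟨m, rfl⟩ := Nat.exists_eq_add_one_of_ne_zero ha.ne'
  rw [chiSqMeasure, integrable_withDensity_iff (measurable_chiSqDensity _).ennreal_ofReal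
    (ae_of_all _ fun _ => ENNReal.ofReal_lt_top)]
  simp_rw [ENNReal.toReal_ofReal (chiSqDensity_nonneg _ _), id, mul_chiSqDensity_succ]
  exact (integrable_chiSqDensity _).const_mul _

lemma integral_id_chiSqMeasure {a : ℕ} (ha : 0 < a) : ∫ x, x ∂chiSqMeasure a = 2 * a := by
  obtain ⟨m, rfl⟩ := Nat.exists_eq_add_one_of_ne_zero ha.ne'
  simp_rw [integral_chiSqMeasure, mul_comm (chiSqDensity _ _), mul_chiSqDensity_succ]
  rw [integral_const_mul, integral_chiSqDensity (by omega), mul_one]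
  push_cast; ring

section RandomVariable

variable {Ω : Type*} [MeasurableSpace Ω] {μ : Measure Ω} {X : Ω → ℝ} {a : ℕ}

lemma integrable_of_map_eq_chiSqMeasure (hX : Measurable X) (ha : 0 < a)
    (hlaw : μ.map X = chiSqMeasure a) : Integrable X μ := by
  have h := integrable_id_chiSqMeasure ha
  rw [← hlaw] at h
  exact (integrable_map_measure aestronglyMeasurable_id hX.aemeasurable).1 h

lemma integral_of_map_eq_chiSqMeasure (hX : Measurable X) (ha : 0 < a)
    (hlaw : μ.map X = chiSqMeasure a) : ∫ ω, X ω ∂μ = 2 * a := by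
  rw [← integral_id_chiSqMeasure ha, ← hlaw]
  exact (integral_map hX.aemeasurable aestronglyMeasurable_id).symm

lemma ae_nonneg_of_map_eq_chiSqMeasure (hX : Measurable X) (hlaw : μ.map X = chiSqMeasure a) :
    0 ≤ᵐ[μ] X :=
  ae_of_ae_map (p := fun x => 0 ≤ x) hX.aemeasurable (hlaw ▸ ae_nonneg_chiSqMeasure a)

lemma measureReal_lt_div_of_map_eq_chiSqMeasure (hX : Measurable X) (ha : 0 < a)
    (hlaw : μ.map X = chiSqMeasure a) {t : ℝ} (ht : 0 ≤ t) :
    μ.real {ω | t < X ω / (2 * a)} = erlangTail a (a * t) := by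
  have hset : {ω | t < X ω / (2 * a)} = X ⁻¹' Ioi (2 * a * t) := by
    ext ω
    simp [lt_div_iff₀ (by positivity : (0 : ℝ) < 2 * a), mul_comm t]
  rw [measureReal_def, hset, ← Measure.map_apply hX measurableSet_Ioi, hlaw,
    chiSqMeasure_Ioi ha (by positivity), mul_div_right_comm, mul_div_cancel_left₀ _ two_ne_zero,
    ENNReal.toReal_ofReal (erlangTail_nonneg _ (by positivity))]

end RandomVariable

section Min

variable {Ω : Type*} [MeasurableSpace Ω] {μ : Measure Ω} {U V : Ω → ℝ}

lemma integral_abs_sub_eq (hU : Integrable U μ) (hV : Integrable V μ) :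
    ∫ ω, |U ω - V ω| ∂μ =
      ∫ ω, U ω ∂μ + ∫ ω, V ω ∂μ - 2 * ∫ ω, min (U ω) (V ω) ∂μ := by
  have hpt : ∀ ω, |U ω - V ω| = U ω + V ω - 2 * min (U ω) (V ω) := fun ω => by
    rcases le_total (U ω) (V ω) with h | h
    · rw [abs_of_nonpos (sub_nonpos.2 h), min_eq_left h]; ring
    · rw [abs_of_nonneg (sub_nonneg.2 h), min_eq_right h]; ring
  have hadd : Integrable (fun ω => U ω + V ω) μ := hU.add hV
  have hmin : Integrable (fun ω => min (U ω) (V ω)) μ := hU.inf hV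
  simp_rw [hpt]
  rw [integral_sub hadd (hmin.const_mul 2), integral_add hU hV, integral_const_mul]

lemma ProbabilityTheory.IndepFun.integral_min_eq (hUV : IndepFun U V μ) (hU : Integrable U μ)
    (hV : Integrable V μ) (hU₀ : 0 ≤ᵐ[μ] U) (hV₀ : 0 ≤ᵐ[μ] V) :
    ∫ ω, min (U ω) (V ω) ∂μ =
      ∫ t in Ioi 0, μ.real {ω | t < U ω} * μ.real {ω | t < V ω} := by
  have h₀ : 0 ≤ᵐ[μ] fun ω => min (U ω) (V ω) := by
    filter_upwards [hU₀, hV₀] with ω h₁ h₂ using le_min h₁ h₂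
  have hmin : Integrable (fun ω => min (U ω) (V ω)) μ := hU.inf hV
  rw [hmin.integral_eq_integral_meas_lt h₀]
  congr! 2 with t
  have hset : {ω | t < min (U ω) (V ω)} = U ⁻¹' Ioi t ∩ V ⁻¹' Ioi t := by
    ext ω; simp
  rw [measureReal_def, hset, hUV.measure_inter_preimage_eq_mul _ _ measurableSet_Ioi
    measurableSet_Ioi, ENNReal.toReal_mul]
  rfl

end Min

lemma integral_erlangTail_mul_erlangTail (m n : ℕ) {α β : ℝ} (h : 0 < α + β) :
    ∫ t in Ioi 0, erlangTail m (α * t) * erlangTail n (β * t) =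
      1 / (α + β) * ∑ k ∈ Finset.range m, ∑ l ∈ Finset.range n,
        (α / (α + β)) ^ k * (β / (α + β)) ^ l * ((k + l).choose k : ℝ) := by
  have hexpand : ∀ t, erlangTail m (α * t) * erlangTail n (β * t) =
      ∑ k ∈ Finset.range m, ∑ l ∈ Finset.range n,
        α ^ k * β ^ l / (k ! * l !) * (t ^ (k + l) * exp (-((α + β) * t))) := fun t => by
    rw [erlangTail, erlangTail, mul_mul_mul_comm, ← exp_add, Finset.sum_mul_sum, Finset.mul_sum]
    refine Finset.sum_congr rfl fun k _ => ?_
    rw [Finset.mul_sum]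
    refine Finset.sum_congr rfl fun l _ => ?_
    rw [mul_pow, mul_pow, pow_add]
    ring_nf
  have hint : ∀ k l, Integrable (fun t => α ^ k * β ^ l / (k ! * l !) *
      (t ^ (k + l) * exp (-((α + β) * t)))) (volume.restrict (Ioi 0)) := fun k l =>
    (integrableOn_pow_mul_exp_neg_mul_Ioi (k + l) h).const_mul _
  simp_rw [hexpand]
  rw [integral_finsetSum _ fun k _ => integrable_finsetSum _ fun l _ => hint k l, Finset.mul_sum]
  refine Finset.sum_congr rfl fun k _ => ?_
  rw [integral_finsetSum _ fun l _ => hint k l, Finset.mul_sum]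
  refine Finset.sum_congr rfl fun l _ => ?_
  rw [integral_const_mul, integral_pow_mul_exp_neg_mul_Ioi _ h, Nat.choose_symm_add,
    ← Nat.add_choose_mul_factorial_mul_factorial, div_pow, div_pow]
  push_cast
  field_simp
  ring

theorem chiSq_mean_abs_diff_general {Ω : Type*} [MeasurableSpace Ω] (μ : Measure Ω)
    (a b : ℕ) (ha : 0 < a) (hb : 0 < b)
    (X Y : Ω → ℝ) (hX : Measurable X) (hY : Measurable Y)
    (hindep : IndepFun X Y μ)
    (hXlaw : Measure.map X μ = volume.withDensity fun x => ENNReal.ofReal (chiSqDensity a x))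
    (hYlaw : Measure.map Y μ = volume.withDensity fun x => ENNReal.ofReal (chiSqDensity b x)) :
    (1 / 2 : ℝ) * ∫ ω, |X ω / (2 * a) - Y ω / (2 * b)| ∂μ =
      1 - (1 / (a + b : ℝ)) * ∑ k ∈ Finset.range a, ∑ l ∈ Finset.range b,
        ((a : ℝ) / (a + b)) ^ k * ((b : ℝ) / (a + b)) ^ l * ((k + l).choose k : ℝ) := by
  have hXint := (integrable_of_map_eq_chiSqMeasure hX ha hXlaw).div_const (2 * a : ℝ)
  have hYint := (integrable_of_map_eq_chiSqMeasure hY hb hYlaw).div_const (2 * b : ℝ)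
  have hEX : ∫ ω, X ω / (2 * a) ∂μ = 1 := by
    rw [integral_div, integral_of_map_eq_chiSqMeasure hX ha hXlaw, div_self (by positivity)]
  have hEY : ∫ ω, Y ω / (2 * b) ∂μ = 1 := by
    rw [integral_div, integral_of_map_eq_chiSqMeasure hY hb hYlaw, div_self (by positivity)]
  have hindep' : IndepFun (fun ω => X ω / (2 * a)) (fun ω => Y ω / (2 * b)) μ :=
    hindep.comp (measurable_id.div_const _) (measurable_id.div_const _)
  have hmin := hindep'.integral_min_eq hXint hYint
    ((ae_nonneg_of_map_eq_chiSqMeasure hX hXlaw).mono fun ω h => div_nonneg h (by positivity))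
    ((ae_nonneg_of_map_eq_chiSqMeasure hY hYlaw).mono fun ω h => div_nonneg h (by positivity))
  rw [integral_abs_sub_eq hXint hYint, hEX, hEY, hmin, setIntegral_congr_fun measurableSet_Ioi
    fun t ht => by rw [measureReal_lt_div_of_map_eq_chiSqMeasure hX ha hXlaw ht.le,
      measureReal_lt_div_of_map_eq_chiSqMeasure hY hb hYlaw ht.le],
    integral_erlangTail_mul_erlangTail a b (by positivity)]
  ring

/-- For independent `X ~ χ²_{2a}` and `Y ~ χ²_{2b}`,
`(1/2)·E|X/(2a) − Y/(2b)| = 1 − (1/(a+b)) Σ_{k<a} Σ_{ℓ<b} p^k (1−p)^ℓ C(k+ℓ,k)`,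
with `p = a/(a+b)`. -/
theorem chiSq_mean_abs_diff {Ω : Type*} [MeasurableSpace Ω] (μ : Measure Ω)
    [IsProbabilityMeasure μ] (a b : ℕ) (ha : 0 < a) (hb : 0 < b)
    (X Y : Ω → ℝ) (hX : Measurable X) (hY : Measurable Y)
    (hindep : IndepFun X Y μ)
    (hXlaw : Measure.map X μ = volume.withDensity fun x => ENNReal.ofReal (chiSqDensity a x))
    (hYlaw : Measure.map Y μ = volume.withDensity fun x => ENNReal.ofReal (chiSqDensity b x)) :
    (1 / 2 : ℝ) * ∫ ω, |X ω / (2 * a) - Y ω / (2 * b)| ∂μ =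
      1 - (1 / (a + b : ℝ)) * ∑ k ∈ Finset.range a, ∑ l ∈ Finset.range b,
        ((a : ℝ) / (a + b)) ^ k * ((b : ℝ) / (a + b)) ^ l * ((k + l).choose k : ℝ) :=
  chiSq_mean_abs_diff_general μ a b ha hb X Y hX hY hindep hXlaw hYlaw
end

section
/- Let (p_k, P_k)_{k=1}^n be a weighted spherical 4-design on ℂ^d and ξ a traceless Hermitian operator. Let S take value d·Tr(ξ P_k) with probability p_k. Then E[S⁴] = (d³/((d+1)(d+2)(d+3)))·(3·(Tr(ξ²))² + 6·Tr(ξ⁴)) ≤ (d/(d+1))³ · 9·(Tr(ξ²))². -/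
open ComplexOrder

/-- The 4-fold tensor power of a matrix on `ℂ^d`, as a matrix on `(ℂ^d)^{⊗4}`
with index type `Fin 4 → Fin d`. -/
def tpow4 {d : ℕ} (A : Matrix (Fin d) (Fin d) ℂ) :
    Matrix (Fin 4 → Fin d) (Fin 4 → Fin d) ℂ :=
  fun a b => ∏ i, A (a i) (b i)

/-- The unitary permuting the four tensor factors of `(ℂ^d)^{⊗4}` according to `π`. -/
def permOp (d : ℕ) (π : Equiv.Perm (Fin 4)) :
    Matrix (Fin 4 → Fin d) (Fin 4 → Fin d) ℂ :=
  fun a b => if ∀ i, a (π i) = b i then 1 else 0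

/-!
Expanding `Tr(ξ P_k)⁴ = Tr(ξ^{⊗4} P_k^{⊗4})` and summing against the design turns `E[S⁴]` into
`d⁴ / (d(d+1)(d+2)(d+3)) · Σ_π Tr(ξ^{⊗4} U_π)`. The summand is a class function of `π`, so the
sum only needs one permutation of each cycle type of `S₄`, weighted by the size of its class:
`Σ_π Tr(ξ^{⊗4} U_π) = (Tr ξ)⁴ + 6 (Tr ξ)² Tr ξ² + 8 Tr ξ Tr ξ³ + 6 Tr ξ⁴ + 3 (Tr ξ²)²`, and
`Tr ξ = 0` leaves `3 (Tr ξ²)² + 6 Tr ξ⁴`. For the bound, `Tr ξ² = ‖ξ‖²` and `Tr ξ⁴ = ‖ξ²‖²` in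
the Frobenius norm, which is submultiplicative, so `Tr ξ⁴ ≤ (Tr ξ²)²`.
-/

open Equiv Equiv.Perm Finset Matrix

section PermTrace

variable {ι n R : Type*} [Fintype ι] [DecidableEq ι] [Fintype n] [CommSemiring R]

/-- `Tr(ξ^{⊗ι} U_σ)`, written out in coordinates. -/
def permTrace (ξ : Matrix n n R) (σ : Perm ι) : R :=
  ∑ b : ι → n, ∏ i, ξ (b (σ i)) (b i)

theorem permTrace_mul_mul_inv (ξ : Matrix n n R) (σ τ : Perm ι) :
    permTrace ξ (τ * σ * τ⁻¹) = permTrace ξ σ := by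
  refine Fintype.sum_equiv (arrowCongr τ⁻¹ (Equiv.refl n)) _ _ fun b => ?_
  refine (Fintype.prod_equiv τ _ _ fun i => ?_).symm
  simp [arrowCongr, Perm.inv_def]

theorem IsConj.permTrace_eq (ξ : Matrix n n R) {σ τ : Perm ι} (h : IsConj σ τ) :
    permTrace ξ σ = permTrace ξ τ := by
  obtain ⟨c, rfl⟩ := isConj_iff.1 h
  exact (permTrace_mul_mul_inv ξ σ c).symm

end PermTrace

theorem sum_fin_four_fun {n M : Type*} [Fintype n] [AddCommMonoid M] (f : (Fin 4 → n) → M) :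
    ∑ b, f b = ∑ b₀, ∑ b₁, ∑ b₂, ∑ b₃, f ![b₀, b₁, b₂, b₃] := by
  simp only [← (Fin.consEquiv fun _ => n).sum_comp, Fintype.sum_prod_type, Fintype.sum_unique]
  rfl

theorem sum_perm_fin_four_of_isConj {M : Type*} [AddCommMonoid M] (f : Perm (Fin 4) → M)
    (hf : ∀ σ τ, IsConj σ τ → f σ = f τ) :
    ∑ σ, f σ = f 1 + 6 • f (swap 0 1) + 8 • f (swap 0 1 * swap 1 2) + 6 • f (finRotate 4)
      + 3 • f (swap 0 1 * swap 2 3) := by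
  -- `decide` runs through `S₄`: the five cycle types exhaust it, with classes of sizes
  -- 1, 6, 8, 6, 3.
  have sum_class (r : Perm (Fin 4)) (k : ℕ)
      (hk : #{σ : Perm (Fin 4) | σ.cycleType = r.cycleType} = k) :
      ∑ σ ∈ {σ : Perm (Fin 4) | σ.cycleType = r.cycleType}, f σ = k • f r := by
    rw [← hk, ← sum_const]
    exact sum_congr rfl fun σ hσ => hf σ r (isConj_iff_cycleType_eq.2 (mem_filter.1 hσ).2)
  rw [← sum_fiberwise_of_maps_to (g := cycleType)
    (t := {cycleType (1 : Perm (Fin 4)), cycleType (swap 0 1 : Perm (Fin 4)),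
      cycleType (swap 0 1 * swap 1 2 : Perm (Fin 4)), cycleType (finRotate 4),
      cycleType (swap 0 1 * swap 2 3 : Perm (Fin 4))}) (by decide),
    sum_insert (by decide), sum_insert (by decide), sum_insert (by decide),
    sum_insert (by decide), sum_singleton, sum_class 1 1 (by decide), sum_class _ 6 (by decide),
    sum_class _ 8 (by decide), sum_class _ 6 (by decide), sum_class _ 3 (by decide), one_smul]
  simp only [add_assoc]

section PermTraceFinFour

variable {n R : Type*} [Fintype n] [CommSemiring R] (ξ : Matrix n n R)

theorem permTrace_one : permTrace ξ (1 : Perm (Fin 4)) = ξ.trace ^ 4 := by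
  simp only [permTrace, sum_fin_four_fun, Perm.coe_one, id_eq, Fin.prod_univ_four, Fin.isValue,
    Matrix.cons_val_zero, Matrix.cons_val_one, Matrix.cons_val, trace, diag_apply, pow_succ,
    pow_zero, one_mul, mul_sum, sum_mul]
  ac_rfl

theorem permTrace_transposition :
    permTrace ξ (swap 0 1 : Perm (Fin 4)) = ξ.trace ^ 2 * (ξ * ξ).trace := by
  simp only [permTrace, sum_fin_four_fun, Fin.prod_univ_four, Fin.isValue, swap_apply_left,
    swap_apply_right, ne_eq, Fin.reduceEq, not_false_eq_true, swap_apply_of_ne_of_ne,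
    Matrix.cons_val_zero, Matrix.cons_val_one, Matrix.cons_val, trace, diag_apply,
    Matrix.mul_apply, sq, mul_sum, sum_mul]
  ac_rfl

theorem permTrace_threeCycle :
    permTrace ξ (swap 0 1 * swap 1 2 : Perm (Fin 4)) = ξ.trace * (ξ * ξ * ξ).trace := by
  simp only [permTrace, sum_fin_four_fun, Fin.prod_univ_four, Fin.isValue, Perm.coe_mul,
    Function.comp_apply, swap_apply_left, swap_apply_right, ne_eq, Fin.reduceEq, zero_ne_one,
    not_false_eq_true, swap_apply_of_ne_of_ne, Matrix.cons_val_zero, Matrix.cons_val_one,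
    Matrix.cons_val, trace, diag_apply, Matrix.mul_apply, mul_sum, sum_mul]
  ac_rfl

theorem permTrace_fourCycle : permTrace ξ (finRotate 4) = (ξ * ξ * ξ * ξ).trace := by
  simp only [permTrace, sum_fin_four_fun, Fin.prod_univ_four, Fin.isValue, finRotate_apply,
    zero_add, Fin.reduceAdd, Matrix.cons_val_zero, Matrix.cons_val_one, Matrix.cons_val, trace,
    diag_apply, Matrix.mul_apply, sum_mul]
  ac_rfl

theorem permTrace_doubleTransposition :
    permTrace ξ (swap 0 1 * swap 2 3 : Perm (Fin 4)) = (ξ * ξ).trace ^ 2 := by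
  simp only [permTrace, sum_fin_four_fun, Fin.prod_univ_four, Fin.isValue, Perm.coe_mul,
    Function.comp_apply, swap_apply_left, swap_apply_right, ne_eq, Fin.reduceEq,
    not_false_eq_true, swap_apply_of_ne_of_ne, Matrix.cons_val_zero, Matrix.cons_val_one,
    Matrix.cons_val, trace, diag_apply, Matrix.mul_apply, sq, mul_sum, sum_mul]
  ac_rfl

theorem sum_permTrace_fin_four :
    ∑ σ : Perm (Fin 4), permTrace ξ σ = ξ.trace ^ 4 + 6 * ξ.trace ^ 2 * (ξ * ξ).trace
      + 8 * ξ.trace * (ξ * ξ * ξ).trace + 6 * (ξ * ξ * ξ * ξ).trace + 3 * (ξ * ξ).trace ^ 2 := by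
  rw [sum_perm_fin_four_of_isConj _ fun _ _ h => h.permTrace_eq ξ, permTrace_one,
    permTrace_transposition, permTrace_threeCycle, permTrace_fourCycle,
    permTrace_doubleTransposition]
  simp only [nsmul_eq_mul, Nat.cast_ofNat, mul_assoc]

end PermTraceFinFour

section TensorPower

variable {d : ℕ}

theorem tpow4_mul (A B : Matrix (Fin d) (Fin d) ℂ) : tpow4 A * tpow4 B = tpow4 (A * B) := by
  ext a b
  simp only [tpow4, Matrix.mul_apply]
  rw [Fintype.prod_sum (f := fun i j => A (a i) j * B j (b i))]
  simp [prod_mul_distrib]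

theorem trace_tpow4 (A : Matrix (Fin d) (Fin d) ℂ) : (tpow4 A).trace = A.trace ^ 4 := by
  simp only [trace, diag_apply, tpow4]
  rw [Fintype.sum_pow]

theorem trace_tpow4_mul_sum_smul {κ : Type*} [Fintype κ] (ξ : Matrix (Fin d) (Fin d) ℂ)
    (w : κ → ℂ) (P : κ → Matrix (Fin d) (Fin d) ℂ) :
    (tpow4 ξ * ∑ k, w k • tpow4 (P k)).trace = ∑ k, w k * (ξ * P k).trace ^ 4 := by
  simp only [mul_sum, trace_sum, Matrix.mul_smul, trace_smul, tpow4_mul, trace_tpow4, smul_eq_mul]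

theorem trace_tpow4_mul_permOp (ξ : Matrix (Fin d) (Fin d) ℂ) (π : Perm (Fin 4)) :
    (tpow4 ξ * permOp d π).trace = permTrace ξ π := by
  simp only [trace, diag_apply, Matrix.mul_apply, tpow4, permOp, permTrace]
  rw [sum_comm]
  refine sum_congr rfl fun b _ => ?_
  rw [sum_eq_single (fun i => b (π i))]
  · simp
  · intro a _ ha
    rw [if_neg, mul_zero]
    exact fun h => ha (funext fun i => (h i).symm)
  · simp

end TensorPower

section Frobenius

attribute [local instance] Matrix.frobeniusSeminormedAddCommGroup

theorem Matrix.frobenius_norm_sq {m n α : Type*} [Fintype m] [Fintype n]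
    [SeminormedAddCommGroup α] (A : Matrix m n α) :
    ‖A‖ ^ 2 = ∑ i, ∑ j, ‖A i j‖ ^ 2 := by
  change ‖WithLp.toLp 2 fun i => WithLp.toLp 2 fun j => A i j‖ ^ 2 = _
  simp [PiLp.norm_sq_eq_of_L2]

theorem Matrix.trace_conjTranspose_mul_self_eq_frobenius_norm_sq {m n 𝕜 : Type*} [Fintype m]
    [Fintype n] [RCLike 𝕜] (A : Matrix m n 𝕜) :
    (Aᴴ * A).trace = ((‖A‖ ^ 2 : ℝ) : 𝕜) := by
  simp only [frobenius_norm_sq, trace, diag_apply, Matrix.mul_apply, conjTranspose_apply,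
    RCLike.star_def, RCLike.conj_mul, RCLike.ofReal_sum, RCLike.ofReal_pow]
  exact sum_comm

theorem design_moment_le_of_le_sq {d x y : ℝ} (hd : 0 ≤ d) (hy : y ≤ x ^ 2) :
    d ^ 3 / ((d + 1) * (d + 2) * (d + 3)) * (3 * x ^ 2 + 6 * y)
      ≤ (d / (d + 1)) ^ 3 * 9 * x ^ 2 := by
  have hcoeff : d ^ 3 / ((d + 1) * (d + 2) * (d + 3)) ≤ d ^ 3 / (d + 1) ^ 3 :=
    div_le_div_of_nonneg_left (by positivity) (by positivity) (by nlinarith)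
  calc d ^ 3 / ((d + 1) * (d + 2) * (d + 3)) * (3 * x ^ 2 + 6 * y)
      ≤ d ^ 3 / ((d + 1) * (d + 2) * (d + 3)) * (9 * x ^ 2) :=
        mul_le_mul_of_nonneg_left (by linarith) (by positivity)
    _ ≤ d ^ 3 / (d + 1) ^ 3 * (9 * x ^ 2) := mul_le_mul_of_nonneg_right hcoeff (by positivity)
    _ = (d / (d + 1)) ^ 3 * 9 * x ^ 2 := by rw [div_pow]; ring

theorem Matrix.IsHermitian.design_moment_le {m : Type*} [Fintype m] {ξ : Matrix m m ℂ}
    (hξ : ξ.IsHermitian) (d : ℕ) :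
    (d : ℂ) ^ 3 / ((d + 1) * (d + 2) * (d + 3))
        * (3 * ((ξ * ξ).trace) ^ 2 + 6 * (ξ * ξ * ξ * ξ).trace)
      ≤ ((d : ℂ) / (d + 1)) ^ 3 * 9 * ((ξ * ξ).trace) ^ 2 := by
  have htrace_sq : (ξ * ξ).trace = ((‖ξ‖ ^ 2 : ℝ) : ℂ) := by
    have h := trace_conjTranspose_mul_self_eq_frobenius_norm_sq ξ
    rw [hξ.eq] at h
    exact h
  have htrace_fourth : (ξ * ξ * ξ * ξ).trace = ((‖ξ * ξ‖ ^ 2 : ℝ) : ℂ) := by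
    have h := trace_conjTranspose_mul_self_eq_frobenius_norm_sq (ξ * ξ)
    rw [conjTranspose_mul, hξ.eq, ← mul_assoc] at h
    exact h
  have hsub : ‖ξ * ξ‖ ^ 2 ≤ (‖ξ‖ ^ 2) ^ 2 :=
    (pow_le_pow_left₀ (norm_nonneg _) (frobenius_norm_mul ξ ξ) 2).trans_eq (by ring)
  rw [htrace_sq, htrace_fourth]
  convert Complex.real_le_real.2 (design_moment_le_of_le_sq (Nat.cast_nonneg d) hsub) using 1 <;>
    push_cast <;> rfl

end Frobenius

theorem four_design_fourth_moment_general {d n : ℕ}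
    (p : Fin n → ℝ)
    (P : Fin n → Matrix (Fin d) (Fin d) ℂ)
    (hdesign : ∑ k, (p k : ℂ) • tpow4 (P k)
      = (1 / ((d : ℂ) * (d + 1) * (d + 2) * (d + 3))) • ∑ π : Equiv.Perm (Fin 4), permOp d π)
    (ξ : Matrix (Fin d) (Fin d) ℂ) (hξ : ξ.IsHermitian) (hξ0 : ξ.trace = 0) :
    ∑ k, (p k : ℂ) * ((d : ℂ) * (ξ * P k).trace) ^ 4
        = ((d : ℂ) ^ 3 / ((d + 1) * (d + 2) * (d + 3)))
          * (3 * ((ξ * ξ).trace) ^ 2 + 6 * (ξ * ξ * ξ * ξ).trace)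
      ∧ ∑ k, (p k : ℂ) * ((d : ℂ) * (ξ * P k).trace) ^ 4
        ≤ ((d : ℂ) / (d + 1)) ^ 3 * 9 * ((ξ * ξ).trace) ^ 2 := by
  have hmoment : ∑ k, (p k : ℂ) * ((d : ℂ) * (ξ * P k).trace) ^ 4
      = (d : ℂ) ^ 3 / ((d + 1) * (d + 2) * (d + 3))
          * (3 * ((ξ * ξ).trace) ^ 2 + 6 * (ξ * ξ * ξ * ξ).trace) :=
    calc ∑ k, (p k : ℂ) * ((d : ℂ) * (ξ * P k).trace) ^ 4
        = (d : ℂ) ^ 4 * (tpow4 ξ * ∑ k, (p k : ℂ) • tpow4 (P k)).trace := by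
          rw [trace_tpow4_mul_sum_smul, mul_sum]
          exact sum_congr rfl fun k _ => by ring
      _ = (d : ℂ) ^ 4 / ((d : ℂ) * (d + 1) * (d + 2) * (d + 3))
          * ∑ π : Perm (Fin 4), permTrace ξ π := by
          rw [hdesign, Matrix.mul_smul, trace_smul, smul_eq_mul, Finset.mul_sum, trace_sum]
          simp only [trace_tpow4_mul_permOp]
          ring
      _ = _ := by
          rw [sum_permTrace_fin_four, hξ0]
          field_simp
          ring
  exact ⟨hmoment, hmoment ▸ hξ.design_moment_le d⟩

/-- For a weighted spherical 4-design `(p_k, P_k)` on `ℂ^d` and traceless Hermitian `ξ`,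
the random variable `S` taking value `d·Tr(ξ P_k)` with probability `p_k` satisfies
`E[S⁴] = (d³/((d+1)(d+2)(d+3)))·(3 (Tr ξ²)² + 6 Tr ξ⁴) ≤ (d/(d+1))³·9 (Tr ξ²)²`. -/
theorem four_design_fourth_moment {d n : ℕ} (hd : 0 < d)
    (p : Fin n → ℝ) (hp : ∀ k, 0 ≤ p k) (hps : ∑ k, p k = 1)
    (P : Fin n → Matrix (Fin d) (Fin d) ℂ)
    (hherm : ∀ k, (P k).IsHermitian)
    (hidem : ∀ k, P k * P k = P k)
    (hrank1 : ∀ k, (P k).trace = 1)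
    (hdesign : ∑ k, (p k : ℂ) • tpow4 (P k)
      = (1 / ((d : ℂ) * (d + 1) * (d + 2) * (d + 3))) • ∑ π : Equiv.Perm (Fin 4), permOp d π)
    (ξ : Matrix (Fin d) (Fin d) ℂ) (hξ : ξ.IsHermitian) (hξ0 : ξ.trace = 0) :
    ∑ k, (p k : ℂ) * ((d : ℂ) * (ξ * P k).trace) ^ 4
        = ((d : ℂ) ^ 3 / ((d + 1) * (d + 2) * (d + 3)))
          * (3 * ((ξ * ξ).trace) ^ 2 + 6 * (ξ * ξ * ξ * ξ).trace)
      ∧ ∑ k, (p k : ℂ) * ((d : ℂ) * (ξ * P k).trace) ^ 4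
        ≤ ((d : ℂ) / (d + 1)) ^ 3 * 9 * ((ξ * ξ).trace) ^ 2 :=
  four_design_fourth_moment_general p P hdesign ξ hξ hξ0
end

section
/- Let ξ be Hermitian on ℂ^{d_A} ⊗ ℂ^{d_B} with partial traces ξ_A = Tr_B ξ and ξ_B = Tr_A ξ, and define Y_B = Tr_A(ξ·(ξ_A ⊗ 𝟙_B)). Then Tr(Y_B²) ≤ Tr(ξ²)·Tr(ξ_A²). -/
open Kronecker ComplexOrder

/-- Partial trace over the `B` system. -/
noncomputable def ptraceB {dA dB : ℕ} (ξ : Matrix (Fin dA × Fin dB) (Fin dA × Fin dB) ℂ) :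
    Matrix (Fin dA) (Fin dA) ℂ :=
  fun i j => ∑ k, ξ (i, k) (j, k)

/-- Partial trace over the `A` system. -/
noncomputable def ptraceA {dA dB : ℕ} (ξ : Matrix (Fin dA × Fin dB) (Fin dA × Fin dB) ℂ) :
    Matrix (Fin dB) (Fin dB) ℂ :=
  fun i j => ∑ k, ξ (k, i) (k, j)

/-!
`Y_B` is Hermitian, and by duality of the partial trace `Tr(Y_B²) = Tr(ξ·(ξ_A ⊗ Y_B))`.
Cauchy–Schwarz for the Hilbert–Schmidt inner product bounds the square of this by
`Tr(ξ²)·Tr((ξ_A ⊗ Y_B)²) = Tr(ξ²)·Tr(ξ_A²)·Tr(Y_B²)`; cancelling `Tr(Y_B²) ≥ 0` gives the claim.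
-/

open Matrix

theorem Matrix.norm_trace_mul_conjTranspose_sq_le {𝕜 n : Type*} [RCLike 𝕜] [Fintype n]
    [DecidableEq n] (X Y : Matrix n n 𝕜) :
    ‖(X * Yᴴ).trace‖ ^ 2 ≤ RCLike.re (X * Xᴴ).trace * RCLike.re (Y * Yᴴ).trace := by
  let _ := toMatrixSeminormedAddCommGroup (1 : Matrix n n 𝕜) PosSemidef.one
  let _ := toMatrixInnerProductSpace (1 : Matrix n n 𝕜) PosSemidef.one
  have h := inner_mul_inner_self_le (𝕜 := 𝕜) Y X
  change ‖(X * 1 * Yᴴ).trace‖ * ‖(Y * 1 * Xᴴ).trace‖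
    ≤ RCLike.re (Y * 1 * Yᴴ).trace * RCLike.re (X * 1 * Xᴴ).trace at h
  simp only [mul_one] at h
  rw [show Y * Xᴴ = (X * Yᴴ)ᴴ by rw [conjTranspose_mul, conjTranspose_conjTranspose],
    trace_conjTranspose, norm_star] at h
  rwa [sq, mul_comm (RCLike.re _)]

theorem Matrix.IsHermitian.trace_mul_self_nonneg {𝕜 n : Type*} [RCLike 𝕜] [Fintype n]
    {M : Matrix n n 𝕜} (hM : M.IsHermitian) : 0 ≤ (M * M).trace := by
  simpa only [hM.eq] using (posSemidef_conjTranspose_mul_self M).trace_nonneg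

section PartialTrace

variable {dA dB : ℕ}

theorem conjTranspose_ptraceA (M : Matrix (Fin dA × Fin dB) (Fin dA × Fin dB) ℂ) :
    (ptraceA M)ᴴ = ptraceA Mᴴ := by
  ext i j
  simp [ptraceA, conjTranspose_apply]

theorem conjTranspose_ptraceB (M : Matrix (Fin dA × Fin dB) (Fin dA × Fin dB) ℂ) :
    (ptraceB M)ᴴ = ptraceB Mᴴ := by
  ext i j
  simp [ptraceB, conjTranspose_apply]

theorem isHermitian_ptraceB {M : Matrix (Fin dA × Fin dB) (Fin dA × Fin dB) ℂ}
    (hM : M.IsHermitian) : (ptraceB M).IsHermitian := by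
  rw [IsHermitian, conjTranspose_ptraceB, hM.eq]

theorem trace_ptraceA_mul (M : Matrix (Fin dA × Fin dB) (Fin dA × Fin dB) ℂ)
    (N : Matrix (Fin dB) (Fin dB) ℂ) : (ptraceA M * N).trace = (M * (1 ⊗ₖ N)).trace := by
  simp only [trace, diag, mul_apply, ptraceA, kroneckerMap_apply, Fintype.sum_prod_type,
    one_apply, ite_mul, one_mul, zero_mul, mul_ite, mul_zero, Finset.sum_mul]
  conv_rhs => enter [2, a, 2, b]; rw [Finset.sum_comm]
  simp only [Finset.sum_ite_eq', Finset.mem_univ, if_true]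
  exact (Finset.sum_congr rfl fun _ _ => Finset.sum_comm).trans Finset.sum_comm

theorem ptraceA_kronecker_one_mul_comm (A : Matrix (Fin dA) (Fin dA) ℂ)
    (M : Matrix (Fin dA × Fin dB) (Fin dA × Fin dB) ℂ) :
    ptraceA ((A ⊗ₖ 1) * M) = ptraceA (M * (A ⊗ₖ 1)) := by
  ext i j
  simp only [ptraceA, mul_apply, kroneckerMap_apply, Fintype.sum_prod_type, one_apply, mul_ite,
    mul_one, mul_zero, ite_mul, zero_mul, Finset.sum_ite_eq, Finset.sum_ite_eq',
    Finset.mem_univ, if_true]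
  rw [Finset.sum_comm]
  simp_rw [mul_comm]

theorem isHermitian_ptraceA_mul_kronecker_one {M : Matrix (Fin dA × Fin dB) (Fin dA × Fin dB) ℂ}
    {A : Matrix (Fin dA) (Fin dA) ℂ} (hM : M.IsHermitian) (hA : A.IsHermitian) :
    (ptraceA (M * (A ⊗ₖ 1))).IsHermitian := by
  rw [IsHermitian, conjTranspose_ptraceA, conjTranspose_mul, conjTranspose_kronecker, hA.eq,
    conjTranspose_one, hM.eq, ptraceA_kronecker_one_mul_comm]

theorem trace_ptraceA_mul_kronecker_one_mul (M : Matrix (Fin dA × Fin dB) (Fin dA × Fin dB) ℂ)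
    (A : Matrix (Fin dA) (Fin dA) ℂ) (N : Matrix (Fin dB) (Fin dB) ℂ) :
    (ptraceA (M * (A ⊗ₖ 1)) * N).trace = (M * (A ⊗ₖ N)).trace := by
  rw [trace_ptraceA_mul, mul_assoc, ← mul_kronecker_mul, mul_one, one_mul]

end PartialTrace

/-- For Hermitian `ξ` on `ℂ^{d_A} ⊗ ℂ^{d_B}` and `Y_B = Tr_A(ξ·(ξ_A ⊗ 𝟙_B))`,
`Tr(Y_B²) ≤ Tr(ξ²)·Tr(ξ_A²)`. -/
theorem trace_YB_sq_le {dA dB : ℕ}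
    (ξ : Matrix (Fin dA × Fin dB) (Fin dA × Fin dB) ℂ) (hξ : ξ.IsHermitian) :
    (ptraceA (ξ * (ptraceB ξ ⊗ₖ (1 : Matrix (Fin dB) (Fin dB) ℂ)))
        * ptraceA (ξ * (ptraceB ξ ⊗ₖ (1 : Matrix (Fin dB) (Fin dB) ℂ)))).trace
      ≤ (ξ * ξ).trace * (ptraceB ξ * ptraceB ξ).trace := by
  set A := ptraceB ξ
  set Y := ptraceA (ξ * (A ⊗ₖ (1 : Matrix (Fin dB) (Fin dB) ℂ)))
  have hA : A.IsHermitian := isHermitian_ptraceB hξ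
  have hY : Y.IsHermitian := isHermitian_ptraceA_mul_kronecker_one hξ hA
  have hCS := norm_trace_mul_conjTranspose_sq_le ξ (A ⊗ₖ Y)
  rw [conjTranspose_kronecker, hA.eq, hY.eq, hξ.eq, ← trace_ptraceA_mul_kronecker_one_mul,
    ← mul_kronecker_mul, trace_kronecker] at hCS
  obtain ⟨t, ht, htY⟩ := RCLike.nonneg_iff_exists_ofReal.1 hY.trace_mul_self_nonneg
  obtain ⟨x, hx, hxξ⟩ := RCLike.nonneg_iff_exists_ofReal.1 hξ.trace_mul_self_nonneg
  obtain ⟨a, ha, haA⟩ := RCLike.nonneg_iff_exists_ofReal.1 hA.trace_mul_self_nonneg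
  rw [← htY, ← hxξ, ← haA] at hCS ⊢
  simp only [← RCLike.ofReal_mul, RCLike.ofReal_re, RCLike.norm_ofReal, abs_of_nonneg ht] at hCS
  exact_mod_cast (show t ≤ x * a by nlinarith [mul_nonneg hx ha])
end

section
/- Let ξ be Hermitian on ℂ^{d_A} ⊗ ℂ^{d_B}. Then Tr(ξ²·(ξ_A ⊗ ξ_B)) ≤ Tr(ξ²)·√(Tr(ξ_A²)·Tr(ξ_B²)) ≤ (1/2)·Tr(ξ²)·(Tr(ξ_A²) + Tr(ξ_B²)), where ξ_A = Tr_B ξ, ξ_B = Tr_A ξ. -/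
/-!
All three traces are Hilbert–Schmidt quantities: for Hermitian `X`, `Tr(X²) = ‖X‖²` in the
Frobenius norm. Writing `Tr(ξ² M) = ⟨ξ, ξ M⟩`, Cauchy–Schwarz and submultiplicativity give
`Tr(ξ² M) ≤ ‖ξ‖² ‖M‖`, and `‖ξ_A ⊗ ξ_B‖ = ‖ξ_A‖ ‖ξ_B‖` is the square root of
`Tr(ξ_A²) Tr(ξ_B²)`. The second inequality is AM–GM.
-/

open Kronecker

open Matrix WithLp

attribute [local instance] Matrix.frobeniusNormedAddCommGroup

namespace Matrix
variable {𝕜 m n p q : Type*} [RCLike 𝕜] [Fintype m] [Fintype n] [Fintype p] [Fintype q]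

/-- The Frobenius norm of `A` is by definition the norm of this vector of rows. -/
theorem trace_conjTranspose_mul_eq_inner (A B : Matrix m n 𝕜) :
    (Aᴴ * B).trace =
      inner 𝕜 (toLp 2 fun i => toLp 2 (A i) : PiLp 2 fun _ : m => EuclideanSpace 𝕜 n)
        (toLp 2 fun i => toLp 2 (B i)) := by
  simp only [trace, diag, mul_apply, conjTranspose_apply, PiLp.inner_apply, RCLike.inner_apply]
  rw [Finset.sum_comm]
  simp only [mul_comm, starRingEnd_apply]

theorem re_trace_conjTranspose_mul_le (A B : Matrix m n 𝕜) :
    RCLike.re (Aᴴ * B).trace ≤ ‖A‖ * ‖B‖ :=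
  trace_conjTranspose_mul_eq_inner A B ▸ re_inner_le_norm _ _

theorem trace_conjTranspose_mul_self (A : Matrix m n 𝕜) :
    (Aᴴ * A).trace = ((‖A‖ ^ 2 : ℝ) : 𝕜) := by
  rw [trace_conjTranspose_mul_eq_inner, inner_self_eq_norm_sq_to_K, RCLike.ofReal_pow]
  rfl

theorem frobenius_norm_kronecker (A : Matrix m n 𝕜) (B : Matrix p q 𝕜) :
    ‖A ⊗ₖ B‖ = ‖A‖ * ‖B‖ := by
  have h : ((‖A ⊗ₖ B‖ ^ 2 : ℝ) : 𝕜) = ((‖A‖ * ‖B‖) ^ 2 : ℝ) := by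
    rw [← trace_conjTranspose_mul_self, conjTranspose_kronecker, ← mul_kronecker_mul,
      trace_kronecker, trace_conjTranspose_mul_self, trace_conjTranspose_mul_self]
    push_cast; ring
  exact (pow_left_inj₀ (norm_nonneg _) (by positivity) two_ne_zero).1 (RCLike.ofReal_inj.1 h)

theorem IsHermitian.re_trace_mul_self {A : Matrix n n 𝕜} (hA : A.IsHermitian) :
    RCLike.re (A * A).trace = ‖A‖ ^ 2 := by
  have h := trace_conjTranspose_mul_self A
  rw [hA.eq] at h
  rw [h, RCLike.ofReal_re]

theorem IsHermitian.re_trace_mul_self_mul_le {A : Matrix n n 𝕜} (hA : A.IsHermitian)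
    (M : Matrix n n 𝕜) : RCLike.re (A * A * M).trace ≤ ‖A‖ ^ 2 * ‖M‖ :=
  calc RCLike.re (A * A * M).trace = RCLike.re (Aᴴ * (A * M)).trace := by rw [hA.eq, mul_assoc]
    _ ≤ ‖A‖ * ‖A * M‖ := re_trace_conjTranspose_mul_le _ _
    _ ≤ ‖A‖ * (‖A‖ * ‖M‖) := by gcongr; exact frobenius_norm_mul _ _
    _ = ‖A‖ ^ 2 * ‖M‖ := by ring

section PartialTrace

variable {dA dB : ℕ} {ξ : Matrix (Fin dA × Fin dB) (Fin dA × Fin dB) ℂ}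

theorem IsHermitian.ptraceB (hξ : ξ.IsHermitian) : (_root_.ptraceB ξ).IsHermitian :=
  IsHermitian.ext fun i j => by simp only [_root_.ptraceB, star_sum, hξ.apply]

theorem IsHermitian.ptraceA (hξ : ξ.IsHermitian) : (_root_.ptraceA ξ).IsHermitian :=
  IsHermitian.ext fun i j => by simp only [_root_.ptraceA, star_sum, hξ.apply]

end PartialTrace

end Matrix

/-- For Hermitian `ξ` on `ℂ^{d_A} ⊗ ℂ^{d_B}`:
`Tr(ξ²(ξ_A ⊗ ξ_B)) ≤ Tr(ξ²)·√(Tr ξ_A² · Tr ξ_B²) ≤ (1/2)·Tr(ξ²)·(Tr ξ_A² + Tr ξ_B²)`. -/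
theorem trace_xi_sq_kron_bound {dA dB : ℕ}
    (ξ : Matrix (Fin dA × Fin dB) (Fin dA × Fin dB) ℂ) (hξ : ξ.IsHermitian) :
    ((ξ * ξ * (ptraceB ξ ⊗ₖ ptraceA ξ)).trace).re
        ≤ ((ξ * ξ).trace).re
          * Real.sqrt (((ptraceB ξ * ptraceB ξ).trace).re
              * ((ptraceA ξ * ptraceA ξ).trace).re)
      ∧ ((ξ * ξ).trace).re
          * Real.sqrt (((ptraceB ξ * ptraceB ξ).trace).re
              * ((ptraceA ξ * ptraceA ξ).trace).re)
        ≤ (1 / 2 : ℝ) * ((ξ * ξ).trace).re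
          * (((ptraceB ξ * ptraceB ξ).trace).re + ((ptraceA ξ * ptraceA ξ).trace).re) := by
  have re_trace_sq : ∀ {n : Type} [Fintype n] {X : Matrix n n ℂ}, X.IsHermitian →
      (X * X).trace.re = ‖X‖ ^ 2 := fun hX => hX.re_trace_mul_self
  rw [re_trace_sq hξ, re_trace_sq hξ.ptraceB, re_trace_sq hξ.ptraceA, ← mul_pow,
    Real.sqrt_sq (by positivity)]
  constructor
  · calc (ξ * ξ * (ptraceB ξ ⊗ₖ ptraceA ξ)).trace.re
        ≤ ‖ξ‖ ^ 2 * ‖ptraceB ξ ⊗ₖ ptraceA ξ‖ := hξ.re_trace_mul_self_mul_le _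
      _ = ‖ξ‖ ^ 2 * (‖ptraceB ξ‖ * ‖ptraceA ξ‖) := by rw [frobenius_norm_kronecker]
  · have amgm := mul_le_mul_of_nonneg_left (two_mul_le_add_sq ‖ptraceB ξ‖ ‖ptraceA ξ‖)
      (sq_nonneg ‖ξ‖)
    linarith
end

section
/- Let σ = (𝟙 + F)/(d(d+1)) and α = (𝟙 − F)/(d(d−1)) be the normalized projectors onto the symmetric and antisymmetric subspaces of ℂ^d ⊗ ℂ^d (d ≥ 2), where F is the swap. For any Hermitian M on ℂ^d ⊗ ℂ^d with 0 ≤ M ≤ 𝟙 whose partial transpose satisfies 0 ≤ M^Γ ≤ 𝟙, one has |Tr((σ − α)M)| ≤ 2/(d+1). -/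
/-!
Writing `|Φ⟩ = d^{-1/2} Σᵢ |ii⟩`, one has `σ − α = 2/(d+1) · (F/d − α)` and `F^Γ = d |Φ⟩⟨Φ|`.
Partial transposition preserves `Tr (A B)`, so `Tr ((F/d) M) = Tr (|Φ⟩⟨Φ| M^Γ)`. Both this
number and `Tr (α M)` are expectations of an effect (`M^Γ`, resp. `M`) in a state
(`|Φ⟩⟨Φ|`, resp. `α`), hence lie in `[0, 1]`; so `Tr ((σ − α) M)` is `2/(d+1)` times the
difference of two numbers in `[0, 1]`.
-/

open ComplexOrder

/-- The swap operator `F` on `ℂ^d ⊗ ℂ^d`. -/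
noncomputable def swapOp (d : ℕ) : Matrix (Fin d × Fin d) (Fin d × Fin d) ℂ :=
  fun p q => if p.1 = q.2 ∧ p.2 = q.1 then 1 else 0

/-- The partial transpose on the second tensor factor (in the computational basis). -/
noncomputable def ptransposeB {d : ℕ}
    (M : Matrix (Fin d × Fin d) (Fin d × Fin d) ℂ) :
    Matrix (Fin d × Fin d) (Fin d × Fin d) ℂ :=
  fun p q => M (p.1, q.2) (q.1, p.2)

open scoped Matrix MatrixOrder

namespace Matrix

variable {𝕜 n : Type*} [RCLike 𝕜] [Fintype n] [DecidableEq n]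

lemma PosSemidef.trace_mul_nonneg {A B : Matrix n n 𝕜} (hA : A.PosSemidef) (hB : B.PosSemidef) :
    0 ≤ (A * B).trace := by
  obtain ⟨C, rfl⟩ := CStarAlgebra.nonneg_iff_eq_star_mul_self.mp hA.nonneg
  rw [star_eq_conjTranspose, Matrix.mul_assoc, trace_mul_comm]
  exact (hB.mul_mul_conjTranspose_same C).trace_nonneg

lemma PosSemidef.trace_mul_mem_Icc {A M : Matrix n n 𝕜} (hA : A.PosSemidef) (hM : M.PosSemidef)
    (hM1 : (1 - M).PosSemidef) : (A * M).trace ∈ Set.Icc 0 A.trace :=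
  ⟨hA.trace_mul_nonneg hM, by
    simpa [Matrix.mul_sub, trace_sub, sub_nonneg] using hA.trace_mul_nonneg hM1⟩

lemma IsHermitian.posSemidef_one_sub {U : Matrix n n 𝕜} (hU : U.IsHermitian) (hUU : U * U = 1) :
    (1 - U).PosSemidef := by
  have h : 1 - U = (2⁻¹ : ℝ) • ((1 - U)ᴴ * (1 - U)) := by
    rw [conjTranspose_sub, conjTranspose_one, hU.eq]
    simp only [sub_mul, mul_sub, hUU, mul_one, one_mul]
    module
  rw [h]
  exact (posSemidef_conjTranspose_mul_self _).smul (by norm_num)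

end Matrix

lemma Complex.norm_sub_le_one_of_mem_Icc {z w : ℂ} (hz : z ∈ Set.Icc 0 1)
    (hw : w ∈ Set.Icc 0 1) : ‖z - w‖ ≤ 1 := by
  obtain ⟨x, rfl⟩ : ∃ x : ℝ, z = x := ⟨z.re, eq_re_of_ofReal_le (by exact_mod_cast hz.1)⟩
  obtain ⟨y, rfl⟩ : ∃ y : ℝ, w = y := ⟨w.re, eq_re_of_ofReal_le (by exact_mod_cast hw.1)⟩
  simp only [Set.mem_Icc, ← ofReal_zero, ← ofReal_one, real_le_real] at hz hw
  rw [← ofReal_sub, norm_real, Real.norm_eq_abs]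
  simpa using abs_sub_le_of_le_of_le hz.1 hz.2 hw.1 hw.2

open Matrix

variable {d : ℕ}

/-- `Σᵢ |ii⟩ = √d |Φ⟩`. -/
def maxEntangledVec (d : ℕ) : Fin d × Fin d → ℂ := fun p => if p.1 = p.2 then 1 else 0

noncomputable def maxEntangledState (d : ℕ) : Matrix (Fin d × Fin d) (Fin d × Fin d) ℂ :=
  (1 / (d : ℂ)) • ptransposeB (swapOp d)

noncomputable def symmetricState (d : ℕ) : Matrix (Fin d × Fin d) (Fin d × Fin d) ℂ :=
  (1 / ((d : ℂ) * (d + 1))) • (1 + swapOp d)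

noncomputable def antisymmetricState (d : ℕ) : Matrix (Fin d × Fin d) (Fin d × Fin d) ℂ :=
  (1 / ((d : ℂ) * (d - 1))) • (1 - swapOp d)

lemma swapOp_isHermitian : (swapOp d).IsHermitian := by
  ext p q
  simp only [conjTranspose_apply, swapOp]
  split_ifs <;> simp_all

lemma swapOp_mul_self : swapOp d * swapOp d = 1 := by
  ext p q
  simp [swapOp, mul_apply, one_apply, Fintype.sum_prod_type, ite_and, Prod.ext_iff]

lemma trace_swapOp : (swapOp d).trace = d := by
  simp only [trace, diag, swapOp, Fintype.sum_prod_type]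
  simp [eq_comm]

lemma ptransposeB_swapOp :
    ptransposeB (swapOp d) = vecMulVec (maxEntangledVec d) (star (maxEntangledVec d)) := by
  ext p q
  simp only [ptransposeB, swapOp, vecMulVec_apply, maxEntangledVec, Pi.star_apply]
  split_ifs <;> simp_all

lemma maxEntangledVec_dotProduct_star : maxEntangledVec d ⬝ᵥ star (maxEntangledVec d) = d := by
  simp [maxEntangledVec, dotProduct, Fintype.sum_prod_type]

lemma trace_ptransposeB_mul_ptransposeB (A B : Matrix (Fin d × Fin d) (Fin d × Fin d) ℂ) :
    (ptransposeB A * ptransposeB B).trace = (A * B).trace := by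
  simp only [trace, diag, mul_apply, ptransposeB, Fintype.sum_prod_type]
  refine Finset.sum_congr rfl fun a _ => ?_
  rw [Finset.sum_congr rfl fun _ _ => Finset.sum_comm, Finset.sum_comm]
  exact Finset.sum_congr rfl fun _ _ => Finset.sum_comm

lemma maxEntangledState_posSemidef : (maxEntangledState d).PosSemidef := by
  rw [maxEntangledState, ptransposeB_swapOp]
  exact (posSemidef_vecMulVec_self_star _).smul (by positivity)

lemma trace_maxEntangledState (hd : d ≠ 0) : (maxEntangledState d).trace = 1 := by
  rw [maxEntangledState, trace_smul, ptransposeB_swapOp, trace_vecMulVec,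
    maxEntangledVec_dotProduct_star, smul_eq_mul]
  field_simp

lemma trace_smul_swapOp_mul (M : Matrix (Fin d × Fin d) (Fin d × Fin d) ℂ) :
    ((1 / (d : ℂ)) • swapOp d * M).trace = (maxEntangledState d * ptransposeB M).trace :=
  (trace_ptransposeB_mul_ptransposeB _ M).symm

lemma antisymmetricState_posSemidef (hd : 2 ≤ d) : (antisymmetricState d).PosSemidef := by
  refine (swapOp_isHermitian.posSemidef_one_sub swapOp_mul_self).smul ?_
  have : (1 : ℂ) ≤ d - 1 := by linear_combination (by exact_mod_cast hd : (2 : ℂ) ≤ d)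
  positivity

lemma trace_antisymmetricState (hd : 2 ≤ d) : (antisymmetricState d).trace = 1 := by
  have : (d : ℂ) ≠ 0 := by exact_mod_cast (by omega : d ≠ 0)
  have : (d : ℂ) - 1 ≠ 0 := sub_ne_zero.mpr (by exact_mod_cast (by omega : d ≠ 1))
  rw [antisymmetricState, trace_smul, trace_sub, trace_one, trace_swapOp, Fintype.card_prod,
    Fintype.card_fin, smul_eq_mul, Nat.cast_mul]
  field_simp

lemma symmetricState_sub_antisymmetricState (hd : 2 ≤ d) :
    symmetricState d - antisymmetricState d
      = (2 / (d + 1) : ℝ) • ((1 / (d : ℂ)) • swapOp d - antisymmetricState d) := by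
  have : (d : ℂ) ≠ 0 := by exact_mod_cast (by omega : d ≠ 0)
  have : (d : ℂ) - 1 ≠ 0 := sub_ne_zero.mpr (by exact_mod_cast (by omega : d ≠ 1))
  have : (d : ℂ) + 1 ≠ 0 := by exact_mod_cast (by omega : d + 1 ≠ 0)
  rw [symmetricState, antisymmetricState]
  match_scalars <;> field_simp <;> ring

/-- Data hiding: for the normalized projectors `σ = (𝟙+F)/(d(d+1))` and
`α = (𝟙−F)/(d(d−1))` onto the symmetric and antisymmetric subspaces, any two-outcome
PPT measurement operator `0 ≤ M ≤ 𝟙` with `0 ≤ M^Γ ≤ 𝟙` satisfies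
`|Tr((σ − α)M)| ≤ 2/(d+1)`. -/
theorem ppt_data_hiding {d : ℕ} (hd : 2 ≤ d)
    (M : Matrix (Fin d × Fin d) (Fin d × Fin d) ℂ)
    (hM : M.PosSemidef)
    (hM1 : ((1 : Matrix (Fin d × Fin d) (Fin d × Fin d) ℂ) - M).PosSemidef)
    (hMpt : (ptransposeB M).PosSemidef)
    (hMpt1 : ((1 : Matrix (Fin d × Fin d) (Fin d × Fin d) ℂ) - ptransposeB M).PosSemidef) :
    ‖
        (((((1 / ((d : ℂ) * (d + 1))) • (1 + swapOp d))
            - ((1 / ((d : ℂ) * (d - 1))) • (1 - swapOp d))) * M).trace)‖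
      ≤ 2 / (d + 1 : ℝ) := by
  have hα := (antisymmetricState_posSemidef hd).trace_mul_mem_Icc hM hM1
  have hΦ := maxEntangledState_posSemidef.trace_mul_mem_Icc hMpt hMpt1
  rw [trace_antisymmetricState hd] at hα
  rw [trace_maxEntangledState (by omega)] at hΦ
  change ‖((symmetricState d - antisymmetricState d) * M).trace‖ ≤ _
  rw [symmetricState_sub_antisymmetricState hd, smul_mul, trace_smul, sub_mul, trace_sub,
    trace_smul_swapOp_mul, norm_smul, Real.norm_of_nonneg (by positivity)]
  simpa using mul_le_mul_of_nonneg_left (Complex.norm_sub_le_one_of_mem_Icc hΦ hα)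
    (by positivity : (0 : ℝ) ≤ 2 / (d + 1))
end

section
/- Let ξ be a traceless Hermitian operator on ℂ^{d_A} ⊗ ℂ^{d_B} with D = d_A·d_B, and let S be the random variable D·Tr((|φ⟩⟨φ| ⊗ |ψ⟩⟨ψ|)ξ) where |φ⟩ and |ψ⟩ are independent Haar-uniform unit vectors in ℂ^{d_A} and ℂ^{d_B}. Then E[S²] = (d_A d_B / ((d_A+1)(d_B+1)))·(Tr(ξ²) + Tr(ξ_A²) + Tr(ξ_B²)), where ξ_A = Tr_B ξ and ξ_B = Tr_A ξ. -/
open MeasureTheory Kronecker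

/-- The rank-one projector `|φ⟩⟨φ|` onto a vector `φ ∈ ℂ^d`. -/
noncomputable def proj {d : ℕ} (φ : Fin d → ℂ) : Matrix (Fin d) (Fin d) ℂ :=
  Matrix.vecMulVec φ (star φ)

/-!
Integrate over `ψ` first. For fixed `φ`, `Tr((|φ⟩⟨φ| ⊗ |ψ⟩⟨ψ|) ξ) = Tr(|ψ⟩⟨ψ| N)` with
`N = Tr_A((|φ⟩⟨φ| ⊗ 𝟙) ξ)`, so the second moment of `ψ` gives `((Tr N)² + Tr N²)/(d_B(d_B+1))`.
Here `Tr N = Tr(|φ⟩⟨φ| ξ_A)` and, writing `ξ = ∑ ξ^{kl} ⊗ |k⟩⟨l|`,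
`Tr N² = ∑ Tr(|φ⟩⟨φ| ξ^{kl}) Tr(|φ⟩⟨φ| ξ^{lk})`. Both are sums of products of two linear
functionals of `|φ⟩⟨φ|`, so the second moment of `φ` applies again and produces
`(Tr ξ)² + Tr ξ_A² + Tr ξ_B² + Tr ξ²`, whose first term vanishes.
-/

open Matrix

section PartialTrace

variable {dA dB : ℕ}

/-- The operator coefficients of `ξ = ∑ k l, blockB ξ k l ⊗ |k⟩⟨l|`. -/
def blockB (ξ : Matrix (Fin dA × Fin dB) (Fin dA × Fin dB) ℂ) (k l : Fin dB) :
    Matrix (Fin dA) (Fin dA) ℂ :=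
  of fun i j => ξ (i, k) (j, l)

lemma trace_ptraceA (X : Matrix (Fin dA × Fin dB) (Fin dA × Fin dB) ℂ) :
    (ptraceA X).trace = X.trace := by
  simp only [trace, diag, ptraceA, Fintype.sum_prod_type]
  exact Finset.sum_comm

lemma trace_ptraceB (X : Matrix (Fin dA × Fin dB) (Fin dA × Fin dB) ℂ) :
    (ptraceB X).trace = X.trace := by
  simp only [trace, diag, ptraceB, Fintype.sum_prod_type]

lemma trace_one_kronecker_mul (σ : Matrix (Fin dB) (Fin dB) ℂ)
    (X : Matrix (Fin dA × Fin dB) (Fin dA × Fin dB) ℂ) :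
    ((1 ⊗ₖ σ) * X).trace = (σ * ptraceA X).trace := by
  simp only [trace, diag_apply, mul_apply, kroneckerMap_apply, one_apply, ite_mul, one_mul,
    zero_mul, Fintype.sum_prod_type, Finset.sum_ite_irrel, Finset.sum_const_zero,
    Finset.sum_ite_eq, Finset.mem_univ, if_true, ptraceA, Finset.mul_sum]
  rw [Finset.sum_comm]
  exact Finset.sum_congr rfl fun _ _ => Finset.sum_comm

lemma trace_kronecker_one_mul (ρ : Matrix (Fin dA) (Fin dA) ℂ)
    (X : Matrix (Fin dA × Fin dB) (Fin dA × Fin dB) ℂ) :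
    ((ρ ⊗ₖ 1) * X).trace = (ρ * ptraceB X).trace := by
  simp only [trace, diag_apply, mul_apply, kroneckerMap_apply, one_apply, mul_ite, mul_one,
    mul_zero, ite_mul, zero_mul, Fintype.sum_prod_type, Finset.sum_ite_eq, Finset.mem_univ,
    if_true, ptraceB, Finset.mul_sum]
  exact Finset.sum_congr rfl fun _ _ => Finset.sum_comm

lemma trace_kronecker_mul (ρ : Matrix (Fin dA) (Fin dA) ℂ) (σ : Matrix (Fin dB) (Fin dB) ℂ)
    (ξ : Matrix (Fin dA × Fin dB) (Fin dA × Fin dB) ℂ) :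
    ((ρ ⊗ₖ σ) * ξ).trace = (σ * ptraceA ((ρ ⊗ₖ 1) * ξ)).trace := by
  rw [← trace_one_kronecker_mul, ← Matrix.mul_assoc, ← mul_kronecker_mul, Matrix.one_mul,
    Matrix.mul_one]

lemma ptraceA_kronecker_one_mul_apply (ρ : Matrix (Fin dA) (Fin dA) ℂ)
    (ξ : Matrix (Fin dA × Fin dB) (Fin dA × Fin dB) ℂ) (k l : Fin dB) :
    ptraceA ((ρ ⊗ₖ 1) * ξ) k l = (ρ * blockB ξ k l).trace := by
  simp [trace, mul_apply, ptraceA, blockB, Fintype.sum_prod_type, one_apply]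

lemma trace_blockB (ξ : Matrix (Fin dA × Fin dB) (Fin dA × Fin dB) ℂ) (k l : Fin dB) :
    (blockB ξ k l).trace = ptraceA ξ k l := rfl

lemma sum_trace_blockB_mul_blockB (ξ : Matrix (Fin dA × Fin dB) (Fin dA × Fin dB) ℂ) :
    ∑ k, ∑ l, (blockB ξ k l * blockB ξ l k).trace = (ξ * ξ).trace := by
  simp only [trace, diag, mul_apply, blockB, of_apply, Fintype.sum_prod_type_right]
  exact Finset.sum_congr rfl fun _ _ => Finset.sum_comm

end PartialTrace

lemma trace_mul_self_eq_sum {n R : Type*} [Fintype n] [NonUnitalNonAssocSemiring R]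
    (A : Matrix n n R) :
    (A * A).trace = ∑ i, ∑ j, A i j * A j i := rfl

lemma norm_le_one_of_sum_conj_mul_self_eq_one {ι : Type*} [Fintype ι] {u : ι → ℂ}
    (hu : ∑ i, starRingEnd ℂ (u i) * u i = 1) (i : ι) : ‖u i‖ ≤ 1 := by
  have hsum : ∑ j, ‖u j‖ ^ 2 = 1 := by
    exact_mod_cast (by simpa [← Complex.ofReal_pow, Complex.conj_mul'] using hu :
      ((∑ j, ‖u j‖ ^ 2 : ℝ) : ℂ) = 1)
  have : ‖u i‖ ^ 2 ≤ 1 :=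
    hsum ▸ Finset.single_le_sum (fun j _ => sq_nonneg ‖u j‖) (Finset.mem_univ i)
  exact (sq_le_one_iff₀ (norm_nonneg _)).mp this

lemma norm_proj_apply_le_one {d : ℕ} {u : Fin d → ℂ}
    (hu : ∑ i, starRingEnd ℂ (u i) * u i = 1) (i j : Fin d) : ‖proj u i j‖ ≤ 1 := by
  rw [proj, vecMulVec_apply, norm_mul, Pi.star_apply, norm_star]
  exact mul_le_one₀ (norm_le_one_of_sum_conj_mul_self_eq_one hu i) (norm_nonneg _)
    (norm_le_one_of_sum_conj_mul_self_eq_one hu j)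

lemma norm_trace_mul_le {n : Type*} [Fintype n] {P : Matrix n n ℂ} (hP : ∀ i j, ‖P i j‖ ≤ 1)
    (M : Matrix n n ℂ) : ‖(P * M).trace‖ ≤ ∑ i, ∑ j, ‖M j i‖ := by
  refine (norm_sum_le _ _).trans (Finset.sum_le_sum fun i _ => (norm_sum_le _ _).trans
    (Finset.sum_le_sum fun j _ => ?_))
  rw [norm_mul]
  exact mul_le_of_le_one_left (norm_nonneg _) (hP i j)

lemma continuous_proj {d : ℕ} : Continuous (proj : (Fin d → ℂ) → Matrix (Fin d) (Fin d) ℂ) :=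
  continuous_id.matrix_vecMulVec continuous_star

lemma continuous_proj_kronecker_proj {dA dB : ℕ} :
    Continuous fun x : (Fin dA → ℂ) × (Fin dB → ℂ) => proj x.1 ⊗ₖ proj x.2 :=
  continuous_matrix fun i j => ((continuous_proj.comp continuous_fst).matrix_elem i.1 j.1).mul
    ((continuous_proj.comp continuous_snd).matrix_elem i.2 j.2)

lemma norm_proj_kronecker_proj_apply_le_one {dA dB : ℕ} {u : Fin dA → ℂ} {v : Fin dB → ℂ}
    (hu : ∑ i, starRingEnd ℂ (u i) * u i = 1) (hv : ∑ i, starRingEnd ℂ (v i) * v i = 1)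
    (p q : Fin dA × Fin dB) : ‖(proj u ⊗ₖ proj v) p q‖ ≤ 1 := by
  rw [kroneckerMap_apply, norm_mul]
  exact mul_le_one₀ (norm_proj_apply_le_one hu _ _) (norm_nonneg _)
    (norm_proj_apply_le_one hv _ _)

lemma integrable_trace_mul_mul_trace_mul {Ω X n : Type*} [Fintype n] [MeasurableSpace Ω]
    [TopologicalSpace X] [MeasurableSpace X] [OpensMeasurableSpace X] {μ : Measure Ω}
    [IsFiniteMeasure μ] {P : X → Matrix n n ℂ} (hP : Continuous P) {x : Ω → X}
    (hx : Measurable x) (hbound : ∀ ω i j, ‖P (x ω) i j‖ ≤ 1) (M N : Matrix n n ℂ) :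
    Integrable (fun ω => (P (x ω) * M).trace * (P (x ω) * N).trace) μ := by
  have hcont : Continuous fun y => (P y * M).trace * (P y * N).trace :=
    (hP.matrix_mul continuous_const).matrix_trace.mul (hP.matrix_mul continuous_const).matrix_trace
  refine Integrable.of_bound (hcont.measurable.comp hx).aestronglyMeasurable
    ((∑ i, ∑ j, ‖M j i‖) * ∑ i, ∑ j, ‖N j i‖) (Filter.Eventually.of_forall fun ω => ?_)
  rw [norm_mul]
  exact mul_le_mul (norm_trace_mul_le (hbound ω) M) (norm_trace_mul_le (hbound ω) N)
    (norm_nonneg _) (by positivity)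

lemma integral_trace_kronecker_proj_mul_mul_self {dA dB : ℕ} {Ω : Type*} [MeasurableSpace Ω]
    {μ : Measure Ω} {ψ : Ω → Fin dB → ℂ}
    (hψhaar : ∀ M N : Matrix (Fin dB) (Fin dB) ℂ,
      ∫ ω, (proj (ψ ω) * M).trace * (proj (ψ ω) * N).trace ∂μ
        = (M.trace * N.trace + (M * N).trace) / ((dB : ℂ) * (dB + 1)))
    (ρ : Matrix (Fin dA) (Fin dA) ℂ) (ξ : Matrix (Fin dA × Fin dB) (Fin dA × Fin dB) ℂ) :
    ∫ ω, ((ρ ⊗ₖ proj (ψ ω)) * ξ).trace * ((ρ ⊗ₖ proj (ψ ω)) * ξ).trace ∂μ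
      = ((ρ * ptraceB ξ).trace * (ρ * ptraceB ξ).trace
          + (ptraceA ((ρ ⊗ₖ 1) * ξ) * ptraceA ((ρ ⊗ₖ 1) * ξ)).trace) / ((dB : ℂ) * (dB + 1)) := by
  simp only [trace_kronecker_mul]
  rw [hψhaar, trace_ptraceA, trace_kronecker_one_mul]

lemma integral_trace_proj_mul_mul_self_add {dA dB : ℕ} {Ω : Type*} [MeasurableSpace Ω]
    {μ : Measure Ω} [IsFiniteMeasure μ] {φ : Ω → Fin dA → ℂ} (hφm : Measurable φ)
    (hφunit : ∀ ω, ∑ i, (starRingEnd ℂ) (φ ω i) * φ ω i = 1)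
    (hφhaar : ∀ M N : Matrix (Fin dA) (Fin dA) ℂ,
      ∫ ω, (proj (φ ω) * M).trace * (proj (φ ω) * N).trace ∂μ
        = (M.trace * N.trace + (M * N).trace) / ((dA : ℂ) * (dA + 1)))
    (ξ : Matrix (Fin dA × Fin dB) (Fin dA × Fin dB) ℂ) :
    ∫ ω, ((proj (φ ω) * ptraceB ξ).trace * (proj (φ ω) * ptraceB ξ).trace
          + (ptraceA ((proj (φ ω) ⊗ₖ 1) * ξ) * ptraceA ((proj (φ ω) ⊗ₖ 1) * ξ)).trace) ∂μ
      = ((ptraceB ξ).trace * (ptraceB ξ).trace + (ptraceB ξ * ptraceB ξ).trace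
          + (ptraceA ξ * ptraceA ξ).trace + (ξ * ξ).trace) / ((dA : ℂ) * (dA + 1)) := by
  have hint := integrable_trace_mul_mul_trace_mul (μ := μ) continuous_proj hφm
    (fun ω => norm_proj_apply_le_one (hφunit ω))
  simp only [trace_mul_self_eq_sum (ptraceA _), ptraceA_kronecker_one_mul_apply]
  rw [integral_add (hint _ _) (integrable_finsetSum _ fun k _ => integrable_finsetSum _
    fun l _ => hint _ _), integral_finsetSum _ fun k _ => integrable_finsetSum _
    fun l _ => hint _ _]
  simp only [integral_finsetSum _ fun l _ => hint _ _, hφhaar, ← Finset.sum_div, ← add_div,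
    Finset.sum_add_distrib, trace_blockB, sum_trace_blockB_mul_blockB, ← trace_mul_self_eq_sum]
  ring

/-- Independence of `φ` and `ψ` is expressed by the product measure, and the Haar second
moment `E[|φ⟩⟨φ|^{⊗2}] = (𝟙+F)/(d(d+1))` by its scalar form
`E[Tr(|φ⟩⟨φ|M)·Tr(|φ⟩⟨φ|N)] = (Tr M Tr N + Tr(MN))/(d(d+1))`. -/
theorem isotropic_product_second_moment_general {dA dB : ℕ}
    {ΩA ΩB : Type*} [MeasurableSpace ΩA] [MeasurableSpace ΩB]
    (μA : Measure ΩA) (μB : Measure ΩB)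
    [IsProbabilityMeasure μA] [IsProbabilityMeasure μB]
    (φ : ΩA → Fin dA → ℂ) (ψ : ΩB → Fin dB → ℂ)
    (hφm : Measurable φ) (hψm : Measurable ψ)
    (hφunit : ∀ ω, ∑ i, (starRingEnd ℂ) (φ ω i) * φ ω i = 1)
    (hψunit : ∀ ω, ∑ i, (starRingEnd ℂ) (ψ ω i) * ψ ω i = 1)
    (hφhaar : ∀ M N : Matrix (Fin dA) (Fin dA) ℂ,
      ∫ ω, (proj (φ ω) * M).trace * (proj (φ ω) * N).trace ∂μA
        = (M.trace * N.trace + (M * N).trace) / ((dA : ℂ) * (dA + 1)))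
    (hψhaar : ∀ M N : Matrix (Fin dB) (Fin dB) ℂ,
      ∫ ω, (proj (ψ ω) * M).trace * (proj (ψ ω) * N).trace ∂μB
        = (M.trace * N.trace + (M * N).trace) / ((dB : ℂ) * (dB + 1)))
    (ξ : Matrix (Fin dA × Fin dB) (Fin dA × Fin dB) ℂ)
    (hξ0 : ξ.trace = 0) :
    ∫ ω, (((dA * dB : ℕ) : ℂ)
        * (((proj (φ ω.1) ⊗ₖ proj (ψ ω.2)) * ξ).trace)) ^ 2 ∂(μA.prod μB)
      = (((dA : ℂ) * dB) / ((dA + 1) * (dB + 1)))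
        * ((ξ * ξ).trace + (ptraceB ξ * ptraceB ξ).trace
            + (ptraceA ξ * ptraceA ξ).trace) := by
  have hintegrable : Integrable (fun ω : ΩA × ΩB => ((proj (φ ω.1) ⊗ₖ proj (ψ ω.2)) * ξ).trace
      * ((proj (φ ω.1) ⊗ₖ proj (ψ ω.2)) * ξ).trace) (μA.prod μB) :=
    integrable_trace_mul_mul_trace_mul continuous_proj_kronecker_proj (hφm.prodMap hψm)
      (fun ω => norm_proj_kronecker_proj_apply_le_one (hφunit ω.1) (hψunit ω.2)) ξ ξ
  simp only [mul_pow, sq ((proj _ ⊗ₖ proj _ * ξ).trace)]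
  rw [integral_const_mul, integral_prod _ hintegrable]
  simp only [integral_trace_kronecker_proj_mul_mul_self hψhaar, integral_div,
    integral_trace_proj_mul_mul_self_add hφm hφunit hφhaar, trace_ptraceB, hξ0]
  rcases Nat.eq_zero_or_pos dA with rfl | _
  · simp
  rcases Nat.eq_zero_or_pos dB with rfl | _
  · simp
  push_cast
  field_simp
  ring

/-- Second moment of the locally isotropic measurement on a bipartite system.
Here `φ` and `ψ` are independent Haar-uniform random unit vectors on `ℂ^{d_A}` and
`ℂ^{d_B}` (independence is expressed by the product measure, and the Haar second
moment property `E[|φ⟩⟨φ|^{⊗2}] = (𝟙+F)/(d(d+1))` is expressed in the equivalent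
scalar form `E[Tr(|φ⟩⟨φ|M)·Tr(|φ⟩⟨φ|N)] = (Tr M Tr N + Tr(MN))/(d(d+1))`).
The random variable `S = D·Tr((|φ⟩⟨φ| ⊗ |ψ⟩⟨ψ|)ξ)` then satisfies
`E[S²] = (d_A d_B/((d_A+1)(d_B+1)))·(Tr ξ² + Tr ξ_A² + Tr ξ_B²)` for traceless
Hermitian `ξ`. -/
theorem isotropic_product_second_moment {dA dB : ℕ} (hdA : 0 < dA) (hdB : 0 < dB)
    {ΩA ΩB : Type*} [MeasurableSpace ΩA] [MeasurableSpace ΩB]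
    (μA : Measure ΩA) (μB : Measure ΩB)
    [IsProbabilityMeasure μA] [IsProbabilityMeasure μB]
    (φ : ΩA → Fin dA → ℂ) (ψ : ΩB → Fin dB → ℂ)
    (hφm : Measurable φ) (hψm : Measurable ψ)
    (hφunit : ∀ ω, ∑ i, (starRingEnd ℂ) (φ ω i) * φ ω i = 1)
    (hψunit : ∀ ω, ∑ i, (starRingEnd ℂ) (ψ ω i) * ψ ω i = 1)
    (hφhaar : ∀ M N : Matrix (Fin dA) (Fin dA) ℂ,
      ∫ ω, (proj (φ ω) * M).trace * (proj (φ ω) * N).trace ∂μA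
        = (M.trace * N.trace + (M * N).trace) / ((dA : ℂ) * (dA + 1)))
    (hψhaar : ∀ M N : Matrix (Fin dB) (Fin dB) ℂ,
      ∫ ω, (proj (ψ ω) * M).trace * (proj (ψ ω) * N).trace ∂μB
        = (M.trace * N.trace + (M * N).trace) / ((dB : ℂ) * (dB + 1)))
    (ξ : Matrix (Fin dA × Fin dB) (Fin dA × Fin dB) ℂ)
    (hξ : ξ.IsHermitian) (hξ0 : ξ.trace = 0) :
    ∫ ω, (((dA * dB : ℕ) : ℂ)
        * (((proj (φ ω.1) ⊗ₖ proj (ψ ω.2)) * ξ).trace)) ^ 2 ∂(μA.prod μB)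
      = (((dA : ℂ) * dB) / ((dA + 1) * (dB + 1)))
        * ((ξ * ξ).trace + (ptraceB ξ * ptraceB ξ).trace
            + (ptraceA ξ * ptraceA ξ).trace) :=
  isotropic_product_second_moment_general μA μB φ ψ hφm hψm hφunit hψunit hφhaar hψhaar ξ hξ0
end
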